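/- If a solution (s(τ), y(τ)) of the blown-up equations on the collision manifold {r=0, H̃=0} satisfies ν' ≡ 0 (equivalently K_sh ≡ 0 and J̃ ≡ 0), then it is an equilibrium: y(τ) = ν s(τ) with ν constant, s constant a central configuration, and ν² = 2U(s). -/

import Mathlib

open Finset

/-- The mass inner product on `ℂ^N`. -/
noncomputable def massInner {N : ℕ} (m : Fin N → ℝ) (q v : Fin N → ℂ) : ℝ :=
  ∑ a, m a * (q a * (starRingEnd ℂ) (v a)).re

/-!
On `{K_sh = 0, J̃ = 0}` the horizontal part of `y` vanishes, so `y = ν s` by definiteness of the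
mass inner product. Then `s' = y - ν s = 0`, and `H̃ = 0` with `⟨s, s⟩ = 1` gives `ν² = 2U(s)`.
By Euler's identity `ν' = ⟨s, y'⟩ = ⟨s, ∇U(s)⟩ + ½ν² = -U(s) + ½ν² = 0`, so `ν` is constant too.
Hence `y' = 0`, and the equation for `y'` reads `∇U(s) = -½ν y = -U(s) s`.
-/

section MassInner

variable {N : ℕ} {m : Fin N → ℝ}

@[simp]
lemma massInner_zero_left (v : Fin N → ℂ) : massInner m 0 v = 0 := by
  simp [massInner]

lemma massInner_add_right (q v w : Fin N → ℂ) :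
    massInner m q (v + w) = massInner m q v + massInner m q w := by
  simp only [massInner, Pi.add_apply, map_add, mul_add, Complex.add_re, sum_add_distrib]

lemma massInner_smul_left (c : ℝ) (q v : Fin N → ℂ) :
    massInner m (c • q) v = c * massInner m q v := by
  simp only [massInner, Pi.smul_apply, Complex.real_smul, mul_assoc, Complex.re_ofReal_mul,
    mul_sum]
  exact sum_congr rfl fun a _ => by ring

lemma massInner_smul_right (c : ℝ) (q v : Fin N → ℂ) :
    massInner m q (c • v) = c * massInner m q v := by
  simp only [massInner, Pi.smul_apply, Complex.real_smul, map_mul, Complex.conj_ofReal,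
    mul_left_comm (q _), Complex.re_ofReal_mul, mul_sum]
  exact sum_congr rfl fun a _ => by ring

lemma massInner_self_eq_zero (hm : ∀ a, 0 < m a) {q : Fin N → ℂ} :
    massInner m q q = 0 ↔ q = 0 := by
  have hnormSq : massInner m q q = ∑ a, m a * Complex.normSq (q a) := by
    simp only [massInner, Complex.mul_conj, Complex.ofReal_re]
  refine ⟨fun h => funext fun a => ?_, fun h => h ▸ massInner_zero_left 0⟩
  rw [hnormSq, sum_eq_zero_iff_of_nonneg fun b _ =>
    mul_nonneg (hm b).le (Complex.normSq_nonneg _)] at h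
  simpa [(hm a).ne'] using h a (mem_univ a)

lemma HasDerivAt.massInner {q v : ℝ → Fin N → ℂ} {q' v' : Fin N → ℂ} {τ : ℝ}
    (hq : HasDerivAt q q' τ) (hv : HasDerivAt v v' τ) :
    HasDerivAt (fun t => massInner m (q t) (v t))
      (massInner m q' (v τ) + massInner m (q τ) v') τ := by
  simp only [_root_.massInner, ← sum_add_distrib, ← mul_add, ← Complex.add_re]
  refine HasDerivAt.fun_sum fun a _ => HasDerivAt.const_mul (m a) ?_
  have hprod := (hasDerivAt_pi.mp hq a).mul (hasDerivAt_pi.mp hv a).star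
  exact Complex.reCLM.hasFDerivAt.comp_hasDerivAt τ hprod

end MassInner

lemma eq_of_forall_hasDerivAt_zero {G : Type*} [NormedAddCommGroup G] [NormedSpace ℝ G]
    {f : ℝ → G} (hf : ∀ t, HasDerivAt f 0 t) (t₁ t₂ : ℝ) : f t₁ = f t₂ :=
  is_const_of_deriv_eq_zero (fun t => (hf t).differentiableAt) (fun t => (hf t).deriv) t₁ t₂

theorem equilibrium_of_nu_critical_general {N : ℕ}
    (m : Fin N → ℝ) (hm : ∀ a, 0 < m a)
    (U : (Fin N → ℂ) → ℝ) (gradU : (Fin N → ℂ) → (Fin N → ℂ))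
    (s y : ℝ → Fin N → ℂ) (ν Jt Ksh : ℝ → ℝ) (yhor : ℝ → Fin N → ℂ)
    (hν : ∀ τ, ν τ = massInner m (s τ) (y τ))
    (hyhor : ∀ τ, yhor τ = fun a => y τ a - (ν τ) • s τ a
      - (Jt τ) • (Complex.I * s τ a))
    (hKsh : ∀ τ, Ksh τ = (1 / 2) * massInner m (yhor τ) (yhor τ))
    (hunit : ∀ τ, massInner m (s τ) (s τ) = 1)
    (hEuler : ∀ τ, massInner m (s τ) (gradU (s τ)) = -U (s τ))
    -- the solution lies in `{H̃ = 0}`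
    (hH : ∀ τ, (1 / 2) * massInner m (y τ) (y τ) - U (s τ) = 0)
    (hs : ∀ τ, HasDerivAt s (y τ - ν τ • s τ) τ)
    (hy : ∀ τ, HasDerivAt y (gradU (s τ) + ((1 / 2 : ℝ) * ν τ) • y τ) τ)
    -- hypothesis: `ν' ≡ 0`, equivalently `K_sh ≡ 0` and `J̃ ≡ 0`
    (hKsh0 : ∀ τ, Ksh τ = 0) (hJt0 : ∀ τ, Jt τ = 0) :
    (∀ τ : ℝ, y τ = ν τ • s τ) ∧
    (∀ τ₁ τ₂ : ℝ, ν τ₁ = ν τ₂) ∧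
    (∀ τ₁ τ₂ : ℝ, s τ₁ = s τ₂) ∧
    (∀ τ : ℝ, gradU (s τ) = (-U (s τ)) • s τ) ∧
    (∀ τ : ℝ, (ν τ) ^ 2 = 2 * U (s τ)) := by
  have hyhor0 τ : yhor τ = 0 :=
    (massInner_self_eq_zero hm).mp (by linarith [hKsh τ, hKsh0 τ])
  have hy_radial τ : y τ = ν τ • s τ := funext fun a => by
    simpa [hyhor τ, hJt0 τ, sub_eq_zero] using congrFun (hyhor0 τ) a
  have hs' τ : HasDerivAt s 0 τ := by simpa [hy_radial τ] using hs τ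
  have hν_sq τ : ν τ ^ 2 = 2 * U (s τ) := by
    have := hH τ
    rw [hy_radial τ, massInner_smul_left, massInner_smul_right, hunit τ] at this
    linarith
  have hν' τ : HasDerivAt ν 0 τ := by
    have h := (hs' τ).massInner (m := m) (hy τ)
    rw [massInner_zero_left, massInner_add_right, massInner_smul_right, hEuler τ, ← hν τ,
      ← funext hν] at h
    convert h using 1
    linarith [hν_sq τ]
  have hy' τ : HasDerivAt y 0 τ := by
    have h := (hν' τ).smul (hs' τ)
    rw [smul_zero, zero_smul, add_zero] at h
    exact (funext hy_radial).symm ▸ h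
  refine ⟨hy_radial, eq_of_forall_hasDerivAt_zero hν', eq_of_forall_hasDerivAt_zero hs',
    fun τ => ?_, hν_sq⟩
  have hgrad : gradU (s τ) = -((1 / 2 : ℝ) * ν τ) • y τ := by
    rw [neg_smul, eq_neg_iff_add_eq_zero]; exact (hy τ).unique (hy' τ)
  rw [hgrad, hy_radial τ, smul_smul]
  congr 1
  linarith [hν_sq τ]

/-- Rigidity on the collision manifold: if a solution `(s(τ),y(τ))` of the
blown-up equations on `{r = 0, H̃ = 0}` satisfies `K_sh ≡ 0` and `J̃ ≡ 0`
(equivalently `ν' ≡ 0`), then it is an equilibrium: `y = νs` with `ν` constant,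
`s` constant and a central configuration, and `ν² = 2U(s)`. -/
theorem equilibrium_of_nu_critical {N : ℕ}
    (m : Fin N → ℝ) (hm : ∀ a, 0 < m a)
    (U : (Fin N → ℂ) → ℝ) (gradU : (Fin N → ℂ) → (Fin N → ℂ))
    (s y : ℝ → Fin N → ℂ) (ν Jt Ksh : ℝ → ℝ) (yhor : ℝ → Fin N → ℂ)
    (hν : ∀ τ, ν τ = massInner m (s τ) (y τ))
    (hJt : ∀ τ, Jt τ = massInner m (fun a => Complex.I * s τ a) (y τ))
    (hyhor : ∀ τ, yhor τ = fun a => y τ a - (ν τ) • s τ a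
      - (Jt τ) • (Complex.I * s τ a))
    (hKsh : ∀ τ, Ksh τ = (1 / 2) * massInner m (yhor τ) (yhor τ))
    (hunit : ∀ τ, massInner m (s τ) (s τ) = 1)
    (hEuler : ∀ τ, massInner m (s τ) (gradU (s τ)) = -U (s τ))
    -- the solution lies in `{H̃ = 0}`
    (hH : ∀ τ, (1 / 2) * massInner m (y τ) (y τ) - U (s τ) = 0)
    (hs : ∀ τ, HasDerivAt s (y τ - ν τ • s τ) τ)
    (hy : ∀ τ, HasDerivAt y (gradU (s τ) + ((1 / 2 : ℝ) * ν τ) • y τ) τ)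
    -- hypothesis: `ν' ≡ 0`, equivalently `K_sh ≡ 0` and `J̃ ≡ 0`
    (hKsh0 : ∀ τ, Ksh τ = 0) (hJt0 : ∀ τ, Jt τ = 0) :
    (∀ τ : ℝ, y τ = ν τ • s τ) ∧
    (∀ τ₁ τ₂ : ℝ, ν τ₁ = ν τ₂) ∧
    (∀ τ₁ τ₂ : ℝ, s τ₁ = s τ₂) ∧
    (∀ τ : ℝ, gradU (s τ) = (-U (s τ)) • s τ) ∧
    (∀ τ : ℝ, (ν τ) ^ 2 = 2 * U (s τ)) :=
  equilibrium_of_nu_critical_general m hm U gradU s y ν Jt Ksh yhor hν hyhor hKsh hunit hEuler hH hs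
    hy hKsh0 hJt0
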